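/- arXiv:2102.04337 — 6 statements merged into one kernel-verified Lean document; each statement's English description precedes it below -/
import Mathlib

section
/- Let n = 2 with U = [[0,−2],[1,0]] and V = [[0,−2],[1,0]] (row i, column j giving U(i,j), V(i,j)). Then the identity matching is TU stable (there exists T : Fin 2 → ℝ with T j − T i ≤ R i j + S i j for all i,j, where R i j = U(i,i)−U(i,j), S i j = V(j,j)−V(i,j)), but it is not NTU stable (there exists a pair (i,j) with U(i,j) > U(i,i) and V(i,j) > V(j,j)), and not no-trade stable. -/
theorem stmt_5 (U V : Fin 2 → Fin 2 → ℝ)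
    (hU : U = !![0, -2; 1, 0]) (hV : V = !![0, -2; 1, 0])
    (R S : Fin 2 → Fin 2 → ℝ)
    (hR : ∀ i j, R i j = U i i - U i j)
    (hS : ∀ i j, S i j = V j j - V i j) :
    (∃ T : Fin 2 → ℝ, ∀ i j, T j - T i ≤ R i j + S i j) ∧
    (∃ i j, U i j > U i i ∧ V i j > V j j) ∧
    ¬ (∀ i j, 0 ≤ R i j + S i j) := by
  subst hU hV
  refine ⟨⟨fun i => if i = 0 then 0 else 2, ?_⟩, ⟨1, 0, by norm_num, by norm_num⟩, ?_⟩
  · intro i j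
    rw [hR, hS]
    fin_cases i <;> fin_cases j <;> simp <;> norm_num
  · intro h
    have := h 1 0
    rw [hR, hS] at this
    norm_num at this
end

section
/- Let n = 3 with U = [[0,2,−1],[−1,0,2],[2,−1,0]] and V = [[0,−1,2],[2,0,−1],[−1,2,0]]. Then the identity matching is NTU stable (for all i,j, min(U(i,j)−U(i,i), V(i,j)−V(j,j)) ≤ 0), but it is not ex-ante Pareto efficient: the uniform doubly stochastic matrix π with all entries 1/3 satisfies ∑_j π_{ij} U(i,j) ≥ U(i,i) and ∑_i π_{ij} V(i,j) ≥ V(j,j) for all i,j, with at least one strict inequality. -/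
theorem stmt_6 (U V : Fin 3 → Fin 3 → ℝ)
    (hU : U = !![0, 2, -1; -1, 0, 2; 2, -1, 0])
    (hV : V = !![0, -1, 2; 2, 0, -1; -1, 2, 0]) :
    (∀ i j : Fin 3, min (U i j - U i i) (V i j - V j j) ≤ 0) ∧
    (∀ i : Fin 3, U i i ≤ ∑ j : Fin 3, (1 / 3 : ℝ) * U i j) ∧
    (∀ j : Fin 3, V j j ≤ ∑ i : Fin 3, (1 / 3 : ℝ) * V i j) ∧
    ((∃ i : Fin 3, U i i < ∑ j : Fin 3, (1 / 3 : ℝ) * U i j) ∨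
     (∃ j : Fin 3, V j j < ∑ i : Fin 3, (1 / 3 : ℝ) * V i j)) := by
  subst hU hV
  refine ⟨?_, ?_, ?_, Or.inl ⟨0, ?_⟩⟩ <;>
    simp [Fin.sum_univ_three, Fin.forall_fin_succ, Matrix.cons_val_zero, Matrix.cons_val_one] <;>
    norm_num
end

section
/- Let (M,W,P) be an ordinal marriage market with strict preferences and set of stable matchings S(P). Let μ ∈ S(P) be isolated, i.e., μ'(a) ≠ μ(a) for every agent a and every stable matching μ' ≠ μ. Then for any stable matching μ' and any two men i, î: μ(i) >_i μ'(i) if and only if μ(î) >_î μ'(î). -/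
/-- NTU stability of a matching in an ordinal market with strict preferences. -/
def OrdStable (n : ℕ) (Pm Pw : Fin n → Fin n → ℝ) (σ : Equiv.Perm (Fin n)) : Prop :=
  ¬ ∃ i j : Fin n, Pm i (σ i) < Pm i j ∧ Pw j (σ⁻¹ j) < Pw j i

/-- A stable matching is isolated if every other stable matching gives every agent
(man or woman) a different partner. -/
def Isolated (n : ℕ) (Pm Pw : Fin n → Fin n → ℝ) (μ : Equiv.Perm (Fin n)) : Prop :=
  ∀ μ' : Equiv.Perm (Fin n), OrdStable n Pm Pw μ' → μ' ≠ μ →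
    (∀ i, μ' i ≠ μ i) ∧ (∀ j, μ'⁻¹ j ≠ μ⁻¹ j)

/-- The men-optimal join of two stable matchings is a stable matching. -/
lemma join_stable {n : ℕ} (Pm Pw : Fin n → Fin n → ℝ)
    (hPm : ∀ i, Function.Injective (Pm i)) (hPw : ∀ j, Function.Injective (Pw j))
    (μ μ' : Equiv.Perm (Fin n)) (hμ : OrdStable n Pm Pw μ) (hμ' : OrdStable n Pm Pw μ') :
    ∃ lam : Equiv.Perm (Fin n),
      OrdStable n Pm Pw lam ∧
      ∀ m, lam m = if Pm m (μ m) < Pm m (μ' m) then μ' m else μ m := by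
  set f : Fin n → Fin n := fun m => if Pm m (μ m) < Pm m (μ' m) then μ' m else μ m with hf
  have hinj : Function.Injective f := by
    intro m1 m2 heq
    by_contra hne
    simp only [hf] at heq
    by_cases c1 : Pm m1 (μ m1) < Pm m1 (μ' m1) <;>
      by_cases c2 : Pm m2 (μ m2) < Pm m2 (μ' m2) <;>
        simp only [c1, c2, if_pos, if_neg, if_true, if_false] at heq
    · exact hne (μ'.injective heq)
    · -- c1 true, c2 false, μ' m1 = μ m2 =: w
      set w := μ m2 with hw
      have hinvμ : μ⁻¹ w = m2 := by simp [hw]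
      have hinvμ' : μ'⁻¹ w = m1 := by rw [← heq]; simp
      -- (m1, w) would block μ unless Pw w m1 ≤ Pw w m2
      have hA : Pm m1 (μ m1) < Pm m1 w := by rw [← heq]; exact c1
      have hB : ¬ Pw w (μ⁻¹ w) < Pw w m1 := fun h => hμ ⟨m1, w, hA, h⟩
      rw [hinvμ] at hB
      have hlt : Pw w m1 < Pw w m2 :=
        lt_of_le_of_ne (not_lt.mp hB) (fun h => hne (hPw w h))
      -- (m2, w) blocks μ'
      have hA' : Pm m2 (μ' m2) < Pm m2 w := by
        rcases lt_or_eq_of_le (not_lt.mp c2) with h | h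
        · exact h
        · exfalso
          have : μ' m2 = μ m2 := hPm m2 h
          exact hne (μ'.injective (heq.trans this.symm))
      exact hμ' ⟨m2, w, hA', by rw [hinvμ']; exact hlt⟩
    · -- c1 false, c2 true, μ m1 = μ' m2 =: w
      set w := μ m1 with hw
      have hinvμ : μ⁻¹ w = m1 := by simp [hw]
      have hinvμ' : μ'⁻¹ w = m2 := by rw [heq]; simp
      have hA : Pm m2 (μ m2) < Pm m2 w := by rw [heq]; exact c2
      have hB : ¬ Pw w (μ⁻¹ w) < Pw w m2 := fun h => hμ ⟨m2, w, hA, h⟩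
      rw [hinvμ] at hB
      have hlt : Pw w m2 < Pw w m1 :=
        lt_of_le_of_ne (not_lt.mp hB) (fun h => hne (hPw w h).symm)
      have hA' : Pm m1 (μ' m1) < Pm m1 w := by
        rcases lt_or_eq_of_le (not_lt.mp c1) with h | h
        · exact h
        · exfalso
          have : μ' m1 = μ m1 := hPm m1 h
          exact hne (μ'.injective (this.trans heq))
      exact hμ' ⟨m1, w, hA', by rw [hinvμ']; exact hlt⟩
    · exact hne (μ.injective heq)
  have hbij : Function.Bijective f := Finite.injective_iff_bijective.mp hinj
  refine ⟨Equiv.ofBijective f hbij, ?_, fun m => rfl⟩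
  rintro ⟨i, j, h1, h2⟩
  set lam := Equiv.ofBijective f hbij with hlam
  have hli : lam i = f i := rfl
  have hmax_μ : Pm i (μ i) ≤ Pm i (lam i) := by
    rw [hli]; simp only [hf]
    split <;> [exact le_of_lt (by assumption); exact le_refl _]
  have hmax_μ' : Pm i (μ' i) ≤ Pm i (lam i) := by
    rw [hli]; simp only [hf]
    split <;> [exact le_refl _; exact not_lt.mp (by assumption)]
  set m := lam⁻¹ j with hm
  have hfm : f m = j := lam.apply_symm_apply j
  by_cases cm : Pm m (μ m) < Pm m (μ' m)
  · have hj : μ' m = j := by simpa only [hf, if_pos cm] using hfm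
    have hinv : μ'⁻¹ j = m := by rw [← hj]; simp
    exact hμ' ⟨i, j, lt_of_le_of_lt hmax_μ' h1, by rw [hinv]; exact h2⟩
  · have hj : μ m = j := by simpa only [hf, if_neg cm] using hfm
    have hinv : μ⁻¹ j = m := by rw [← hj]; simp
    exact hμ ⟨i, j, lt_of_le_of_lt hmax_μ h1, by rw [hinv]; exact h2⟩

lemma stmt_14_dir (n : ℕ) (Pm Pw : Fin n → Fin n → ℝ)
    (hPm : ∀ i, Function.Injective (Pm i)) (hPw : ∀ j, Function.Injective (Pw j))
    (μ : Equiv.Perm (Fin n)) (hμ : OrdStable n Pm Pw μ)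
    (hiso : Isolated n Pm Pw μ)
    (μ' : Equiv.Perm (Fin n)) (hμ' : OrdStable n Pm Pw μ')
    (i ihat : Fin n) (h : Pm i (μ' i) < Pm i (μ i)) :
    Pm ihat (μ' ihat) < Pm ihat (μ ihat) := by
  by_contra hh
  have hne : μ' ≠ μ := by
    intro he; rw [he] at h; exact lt_irrefl _ h
  have hdiff := (hiso μ' hμ' hne).1 ihat
  have hlt : Pm ihat (μ ihat) < Pm ihat (μ' ihat) :=
    lt_of_le_of_ne (not_lt.mp hh) (fun he => hdiff (hPm ihat he.symm))
  obtain ⟨lam, hlstab, hlval⟩ := join_stable Pm Pw hPm hPw μ μ' hμ hμ'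
  have hlami : lam i = μ i := by
    rw [hlval i, if_neg (not_lt.mpr (le_of_lt h))]
  have hlamihat : lam ihat = μ' ihat := by
    rw [hlval ihat, if_pos hlt]
  have hlne : lam ≠ μ := by
    intro he
    exact hdiff (by rw [← hlamihat, he])
  exact (hiso lam hlstab hlne).1 i hlami

theorem stmt_14 (n : ℕ) (Pm Pw : Fin n → Fin n → ℝ)
    (hPm : ∀ i, Function.Injective (Pm i)) (hPw : ∀ j, Function.Injective (Pw j))
    (μ : Equiv.Perm (Fin n)) (hμ : OrdStable n Pm Pw μ)
    (hiso : Isolated n Pm Pw μ)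
    (μ' : Equiv.Perm (Fin n)) (hμ' : OrdStable n Pm Pw μ')
    (i ihat : Fin n) :
    Pm i (μ' i) < Pm i (μ i) ↔ Pm ihat (μ' ihat) < Pm ihat (μ ihat) :=
  ⟨stmt_14_dir n Pm Pw hPm hPw μ hμ hiso μ' hμ' i ihat,
   stmt_14_dir n Pm Pw hPm hPw μ hμ hiso μ' hμ' ihat i⟩
end

section
/- Let (M,W,P) be an ordinal marriage market with strict preferences. Then there exists a cardinal representation (U, V) of the preference profile P such that every isolated stable matching μ ∈ S(P) is no-trade stable for (U, V): for all men i and women j, U(i,j) + V(i,j) ≤ U(i,μ(i)) + V(μ⁻¹(j), j). -/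
/-!
Let `G` be the set of isolated stable matchings. If `μ ∈ G` and `μ'` is another stable
matching, then the men's join of `μ` and `μ'` is stable and agrees with `μ` exactly where the
men weakly prefer `μ`; isolation therefore forces all men to prefer the same one of the two,
and by opposition of interests all women prefer the other. Hence, with `U i j` the number of
`μ' ∈ G` in which man `i` does no better than `j`, and `V i j` the number of `μ' ∈ G` in which
woman `j` does no better than `i`, we get `U i (μ i) + V (μ⁻¹ j) j = #G + 1` for every `μ ∈ G`
(each `μ' ≠ μ` is counted once, `μ` twice), while `U i j + V i j ≤ #G` when no matching in `G`
pairs `i` with `j`, since a matching counted twice would be blocked by `(i, j)`. Perturbing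
`U` and `V` by less than `1/2` off the pairs of `G` makes them strict representations of the
preferences without breaking either bound.
-/

open Finset Real Function

noncomputable section

def squash (t : ℝ) : ℝ := (arctan t + π / 2) / (2 * π)

theorem squash_pos (t : ℝ) : 0 < squash t :=
  div_pos (by linarith [neg_pi_div_two_lt_arctan t]) (by positivity)

theorem squash_lt_half (t : ℝ) : squash t < 1 / 2 := by
  rw [squash, div_lt_iff₀ (by positivity)]
  linarith [arctan_lt_pi_div_two t]

theorem squash_strictMono : StrictMono squash := fun s t h => by
  unfold squash
  gcongr

section CountingUtility

variable {α β : Type*} [DecidableEq α] (G : Finset β) (partner : β → α) (p : α → ℝ)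

/-- The tie-breaker `squash` makes the count strictly monotone in `p`. It is switched off at the
partners occurring in `G`, where the count already jumps, so that the sums of utilities at the
pairs of a matching in `G` stay exact. -/
def countingUtility (x : α) : ℝ :=
  #{μ ∈ G | p (partner μ) ≤ p x} + if x ∈ G.image partner then 0 else squash (p x)

variable {G partner p} {x y : α}

theorem countingUtility_of_mem_image (hx : x ∈ G.image partner) :
    countingUtility G partner p x = #{μ ∈ G | p (partner μ) ≤ p x} := by
  simp [countingUtility, hx]

theorem countingUtility_lt_card_add_half :
    countingUtility G partner p x < #{μ ∈ G | p (partner μ) ≤ p x} + 1 / 2 := by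
  unfold countingUtility
  split_ifs
  · norm_num
  · linarith [squash_lt_half (p x)]

theorem countingUtility_lt (h : p x < p y) :
    countingUtility G partner p x < countingUtility G partner p y := by
  have hsub : {μ ∈ G | p (partner μ) ≤ p x} ⊆ {μ ∈ G | p (partner μ) ≤ p y} :=
    monotone_filter_right G fun _ _ hμ => hμ.trans h.le
  by_cases hy : y ∈ G.image partner
  · obtain ⟨μ, hμ, rfl⟩ := mem_image.1 hy
    have hcard : (#{μ' ∈ G | p (partner μ') ≤ p x} : ℝ) + 1 ≤
        #{μ' ∈ G | p (partner μ') ≤ p (partner μ)} := by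
      exact_mod_cast card_lt_card <| (ssubset_iff_of_subset hsub).2
        ⟨μ, mem_filter.2 ⟨hμ, le_rfl⟩, fun hμx => (mem_filter.1 hμx).2.not_gt h⟩
    rw [countingUtility_of_mem_image hy]
    linarith [countingUtility_lt_card_add_half (G := G) (partner := partner) (p := p) (x := x)]
  · have hcard : (#{μ ∈ G | p (partner μ) ≤ p x} : ℝ) ≤ #{μ ∈ G | p (partner μ) ≤ p y} := by
      exact_mod_cast card_le_card hsub
    have htie : (if x ∈ G.image partner then 0 else squash (p x)) < squash (p y) := by
      split_ifs
      exacts [squash_pos _, squash_strictMono h]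
    simp only [countingUtility, if_neg hy]
    linarith

theorem countingUtility_lt_iff (hp : Injective p) :
    countingUtility G partner p x < countingUtility G partner p y ↔ p x < p y := by
  refine ⟨fun h => ?_, countingUtility_lt⟩
  rcases lt_trichotomy (p x) (p y) with hxy | hxy | hxy
  · exact hxy
  · exact absurd h (hp hxy ▸ lt_irrefl _)
  · exact absurd h (countingUtility_lt hxy).not_gt

end CountingUtility

section Market

variable {n : ℕ} {Pm Pw : Fin n → Fin n → ℝ} {μ μ' ν : Equiv.Perm (Fin n)} {i j : Fin n}

theorem OrdStable.le_of_lt (hμ : OrdStable n Pm Pw μ) (h : Pm i (μ i) < Pm i j) :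
    Pw j i ≤ Pw j (μ⁻¹ j) :=
  not_lt.1 fun h' => hμ ⟨i, j, h, h'⟩

theorem OrdStable.apply_eq_of_le_of_le (hPm : ∀ i, Injective (Pm i))
    (hPw : ∀ j, Injective (Pw j)) (hμ : OrdStable n Pm Pw μ)
    (hm : Pm i (μ i) ≤ Pm i j) (hw : Pw j (μ⁻¹ j) ≤ Pw j i) : μ i = j := by
  by_contra hne
  have hinv : μ⁻¹ j ≠ i := fun h => hne (Equiv.Perm.inv_eq_iff_eq.1 h).symm
  exact hμ ⟨i, j, hm.lt_of_ne fun h => hne (hPm i h), hw.lt_of_ne fun h => hinv (hPw j h)⟩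

def menJoin (Pm : Fin n → Fin n → ℝ) (μ μ' : Equiv.Perm (Fin n)) (i : Fin n) : Fin n :=
  if Pm i (μ i) < Pm i (μ' i) then μ' i else μ i

theorem le_menJoin (i : Fin n) :
    Pm i (μ i) ≤ Pm i (menJoin Pm μ μ' i) ∧ Pm i (μ' i) ≤ Pm i (menJoin Pm μ μ' i) := by
  unfold menJoin
  split_ifs with h
  exacts [⟨h.le, le_rfl⟩, ⟨le_rfl, not_lt.1 h⟩]

theorem menJoin_eq_or (i : Fin n) : menJoin Pm μ μ' i = μ i ∨ menJoin Pm μ μ' i = μ' i := by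
  unfold menJoin
  split_ifs
  exacts [Or.inr rfl, Or.inl rfl]

theorem OrdStable.apply_ne_of_lt_of_le (hPm : ∀ i, Injective (Pm i))
    (hPw : ∀ j, Injective (Pw j)) (hμ : OrdStable n Pm Pw μ) (hμ' : OrdStable n Pm Pw μ')
    {x y : Fin n} (hxy : x ≠ y) (hx : Pm x (μ x) < Pm x (μ' x)) (hy : Pm y (μ' y) ≤ Pm y (μ y)) :
    μ' x ≠ μ y := by
  intro hw
  have hμ'w : μ'⁻¹ (μ' x) = x := μ'.symm_apply_apply x
  have hμw : μ⁻¹ (μ' x) = y := hw ▸ μ.symm_apply_apply y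
  rcases lt_or_gt_of_ne fun h => hxy (hPw (μ' x) h) with h | h
  · have hy' : Pm y (μ' y) < Pm y (μ y) :=
      hy.lt_of_ne fun h => hxy (μ'.injective ((hPm y h).trans hw.symm)).symm
    exact hμ' ⟨y, μ' x, hw ▸ hy', by rwa [hμ'w]⟩
  · exact hμ ⟨x, μ' x, hx, by rwa [hμw]⟩

theorem menJoin_injective (hPm : ∀ i, Injective (Pm i)) (hPw : ∀ j, Injective (Pw j))
    (hμ : OrdStable n Pm Pw μ) (hμ' : OrdStable n Pm Pw μ') : Injective (menJoin Pm μ μ') := by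
  intro x y hxy
  by_contra hne
  unfold menJoin at hxy
  split_ifs at hxy with hx hy hy
  · exact hne (μ'.injective hxy)
  · exact hμ.apply_ne_of_lt_of_le hPm hPw hμ' hne hx (not_lt.1 hy) hxy
  · exact hμ.apply_ne_of_lt_of_le hPm hPw hμ' (Ne.symm hne) hy (not_lt.1 hx) hxy.symm
  · exact hne (μ.injective hxy)

theorem OrdStable.of_le_of_eq_or (hμ : OrdStable n Pm Pw μ) (hμ' : OrdStable n Pm Pw μ')
    (hle : ∀ i, Pm i (μ i) ≤ Pm i (ν i) ∧ Pm i (μ' i) ≤ Pm i (ν i))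
    (heq : ∀ i, ν i = μ i ∨ ν i = μ' i) : OrdStable n Pm Pw ν := by
  rintro ⟨i, j, hi, hj⟩
  have hνj : ν (ν⁻¹ j) = j := ν.apply_symm_apply j
  have blocks : ∀ σ : Equiv.Perm (Fin n), OrdStable n Pm Pw σ → Pm i (σ i) ≤ Pm i (ν i) →
      σ (ν⁻¹ j) = j → False := fun σ hσ hσν hσj =>
    (Equiv.Perm.inv_eq_iff_eq.2 hσj.symm ▸ hσ.le_of_lt (hσν.trans_lt hi)).not_gt hj
  rcases heq (ν⁻¹ j) with h | h
  exacts [blocks μ hμ (hle i).1 (h.symm.trans hνj), blocks μ' hμ' (hle i).2 (h.symm.trans hνj)]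

theorem Isolated.forall_lt_or_forall_lt (hPm : ∀ i, Injective (Pm i))
    (hPw : ∀ j, Injective (Pw j)) (hiso : Isolated n Pm Pw μ) (hμ : OrdStable n Pm Pw μ)
    (hμ' : OrdStable n Pm Pw μ') (hne : μ' ≠ μ) :
    (∀ i, Pm i (μ' i) < Pm i (μ i)) ∨ (∀ i, Pm i (μ i) < Pm i (μ' i)) := by
  have hdiff := (hiso μ' hμ' hne).1
  by_contra! h
  obtain ⟨⟨i₁, h₁⟩, i₂, h₂⟩ := h
  let ν := Equiv.ofBijective _ (Finite.injective_iff_bijective.1 (menJoin_injective hPm hPw hμ hμ'))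
  have hν : OrdStable n Pm Pw ν := hμ.of_le_of_eq_or hμ' le_menJoin menJoin_eq_or
  have hν₁ : ν i₁ = μ' i₁ := if_pos (h₁.lt_of_ne fun h => hdiff i₁ (hPm i₁ h).symm)
  have hν₂ : ν i₂ = μ i₂ := if_neg (not_lt.2 h₂)
  exact (hiso ν hν fun h => hdiff i₁ (by rw [← hν₁, h])).1 i₂ hν₂

theorem OrdStable.lt_of_forall_lt (hPw : ∀ j, Injective (Pw j)) (hν : OrdStable n Pm Pw ν)
    (hmen : ∀ i, Pm i (ν i) < Pm i (μ i)) (hdiff : ∀ j, ν⁻¹ j ≠ μ⁻¹ j) (j : Fin n) :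
    Pw j (μ⁻¹ j) < Pw j (ν⁻¹ j) := by
  have hle : Pw j (μ⁻¹ j) ≤ Pw j (ν⁻¹ j) :=
    hν.le_of_lt (by simpa using hmen (μ⁻¹ j))
  exact hle.lt_of_ne fun h => hdiff j (hPw j h).symm

theorem Isolated.le_iff_lt (hPm : ∀ i, Injective (Pm i)) (hPw : ∀ j, Injective (Pw j))
    (hiso : Isolated n Pm Pw μ) (hμ : OrdStable n Pm Pw μ) (hμ' : OrdStable n Pm Pw μ')
    (hne : μ' ≠ μ) (i j : Fin n) :
    Pm i (μ' i) ≤ Pm i (μ i) ↔ Pw j (μ⁻¹ j) < Pw j (μ'⁻¹ j) := by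
  have hdiff := (hiso μ' hμ' hne).2
  rcases hiso.forall_lt_or_forall_lt hPm hPw hμ hμ' hne with h | h
  · exact iff_of_true (h i).le (hμ'.lt_of_forall_lt hPw h hdiff j)
  · exact iff_of_false (h i).not_ge
      (hμ.lt_of_forall_lt hPw h (fun j => (hdiff j).symm) j).not_gt

open Classical in
def isolatedStable (n : ℕ) (Pm Pw : Fin n → Fin n → ℝ) : Finset (Equiv.Perm (Fin n)) :=
  {μ | OrdStable n Pm Pw μ ∧ Isolated n Pm Pw μ}

theorem mem_isolatedStable :
    μ ∈ isolatedStable n Pm Pw ↔ OrdStable n Pm Pw μ ∧ Isolated n Pm Pw μ := by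
  simp [isolatedStable]

theorem card_add_card_of_mem_isolatedStable (hPm : ∀ i, Injective (Pm i))
    (hPw : ∀ j, Injective (Pw j)) (hμ : μ ∈ isolatedStable n Pm Pw) (i j : Fin n) :
    #{μ' ∈ isolatedStable n Pm Pw | Pm i (μ' i) ≤ Pm i (μ i)} +
      #{μ' ∈ isolatedStable n Pm Pw | Pw j (μ'⁻¹ j) ≤ Pw j (μ⁻¹ j)} =
      #(isolatedStable n Pm Pw) + 1 := by
  obtain ⟨hμs, hiso⟩ := mem_isolatedStable.1 hμ
  have hcmp : ∀ μ' ∈ isolatedStable n Pm Pw, μ' ≠ μ →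
      (Pm i (μ' i) ≤ Pm i (μ i) ↔ Pw j (μ⁻¹ j) < Pw j (μ'⁻¹ j)) := fun μ' hμ' hne =>
    hiso.le_iff_lt hPm hPw hμs (mem_isolatedStable.1 hμ').1 hne i j
  rw [← card_union_add_card_inter, ← filter_or, ← filter_and]
  have hunion : {μ' ∈ isolatedStable n Pm Pw |
      Pm i (μ' i) ≤ Pm i (μ i) ∨ Pw j (μ'⁻¹ j) ≤ Pw j (μ⁻¹ j)} = isolatedStable n Pm Pw := by
    refine filter_true_of_mem fun μ' hμ' => ?_
    rcases eq_or_ne μ' μ with rfl | hne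
    · exact Or.inl le_rfl
    · exact or_iff_not_imp_right.2 fun h => (hcmp μ' hμ' hne).2 (not_le.1 h)
  have hinter : {μ' ∈ isolatedStable n Pm Pw |
      Pm i (μ' i) ≤ Pm i (μ i) ∧ Pw j (μ'⁻¹ j) ≤ Pw j (μ⁻¹ j)} = {μ} := by
    refine eq_singleton_iff_unique_mem.2 ⟨mem_filter.2 ⟨hμ, le_rfl, le_rfl⟩, fun μ' h' => ?_⟩
    obtain ⟨hμ', hm, hw⟩ := mem_filter.1 h'
    by_contra hne
    exact ((hcmp μ' hμ' hne).1 hm).not_ge hw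
  rw [hunion, hinter, card_singleton]

theorem card_add_card_le_of_notMem_image (hPm : ∀ i, Injective (Pm i))
    (hPw : ∀ j, Injective (Pw j)) (hij : j ∉ (isolatedStable n Pm Pw).image fun μ => μ i) :
    #{μ' ∈ isolatedStable n Pm Pw | Pm i (μ' i) ≤ Pm i j} +
      #{μ' ∈ isolatedStable n Pm Pw | Pw j (μ'⁻¹ j) ≤ Pw j i} ≤ #(isolatedStable n Pm Pw) := by
  rw [← card_union_of_disjoint]
  · exact card_le_card (union_subset (filter_subset _ _) (filter_subset _ _))
  · refine disjoint_filter.2 fun μ' hμ' hm hw => hij (mem_image.2 ⟨μ', hμ', ?_⟩)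
    exact (mem_isolatedStable.1 hμ').1.apply_eq_of_le_of_le hPm hPw hm hw

variable (n Pm Pw)

def manUtility (i j : Fin n) : ℝ :=
  countingUtility (isolatedStable n Pm Pw) (fun μ => μ i) (Pm i) j

def womanUtility (i j : Fin n) : ℝ :=
  countingUtility (isolatedStable n Pm Pw) (fun μ => μ⁻¹ j) (Pw j) i

variable {n Pm Pw}

theorem manUtility_add_womanUtility_of_mem (hPm : ∀ i, Injective (Pm i))
    (hPw : ∀ j, Injective (Pw j)) (hμ : μ ∈ isolatedStable n Pm Pw) (i j : Fin n) :
    manUtility n Pm Pw i (μ i) + womanUtility n Pm Pw (μ⁻¹ j) j =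
      #(isolatedStable n Pm Pw) + 1 := by
  rw [manUtility, womanUtility,
    countingUtility_of_mem_image (partner := fun μ => μ i) (mem_image_of_mem _ hμ),
    countingUtility_of_mem_image (partner := fun μ => μ⁻¹ j) (mem_image_of_mem _ hμ)]
  exact_mod_cast card_add_card_of_mem_isolatedStable hPm hPw hμ i j

theorem manUtility_add_womanUtility_le (hPm : ∀ i, Injective (Pm i))
    (hPw : ∀ j, Injective (Pw j)) (i j : Fin n) :
    manUtility n Pm Pw i j + womanUtility n Pm Pw i j ≤ #(isolatedStable n Pm Pw) + 1 := by
  by_cases hij : j ∈ (isolatedStable n Pm Pw).image fun μ => μ i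
  · obtain ⟨μ, hμ, rfl⟩ := mem_image.1 hij
    have h := manUtility_add_womanUtility_of_mem hPm hPw hμ i (μ i)
    rw [show μ⁻¹ (μ i) = i from μ.symm_apply_apply i] at h
    exact h.le
  · have hm := countingUtility_lt_card_add_half (G := isolatedStable n Pm Pw)
      (partner := fun μ => μ i) (p := Pm i) (x := j)
    have hw := countingUtility_lt_card_add_half (G := isolatedStable n Pm Pw)
      (partner := fun μ => μ⁻¹ j) (p := Pw j) (x := i)
    have hcard : (#{μ' ∈ isolatedStable n Pm Pw | Pm i (μ' i) ≤ Pm i j} : ℝ) +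
        #{μ' ∈ isolatedStable n Pm Pw | Pw j (μ'⁻¹ j) ≤ Pw j i} ≤ #(isolatedStable n Pm Pw) := by
      exact_mod_cast card_add_card_le_of_notMem_image hPm hPw hij
    unfold manUtility womanUtility
    linarith

end Market

end

theorem stmt_16 (n : ℕ) (Pm Pw : Fin n → Fin n → ℝ)
    (hPm : ∀ i, Function.Injective (Pm i)) (hPw : ∀ j, Function.Injective (Pw j)) :
    ∃ U V : Fin n → Fin n → ℝ,
      (∀ i j j', U i j < U i j' ↔ Pm i j < Pm i j') ∧
      (∀ j i i', V i j < V i' j ↔ Pw j i < Pw j i') ∧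
      ∀ μ : Equiv.Perm (Fin n), OrdStable n Pm Pw μ → Isolated n Pm Pw μ →
        ∀ i j, U i j + V i j ≤ U i (μ i) + V (μ⁻¹ j) j := by
  refine ⟨manUtility n Pm Pw, womanUtility n Pm Pw, fun i _ _ => countingUtility_lt_iff (hPm i),
    fun j _ _ => countingUtility_lt_iff (hPw j), fun μ hμ hiso i j => ?_⟩
  rw [manUtility_add_womanUtility_of_mem hPm hPw (mem_isolatedStable.2 ⟨hμ, hiso⟩)]
  exact manUtility_add_womanUtility_le hPm hPw i j
end

section
/- Consider the 4×4 market with U = [[1.01, 0, 1/2, −1], [0, 1, −1, 1/2], [1/2, 1/5, 1/3, 1/4], [1/5, 1/2, 1/3, 1/4]] and V = [[0, 1, 1/2, −1], [1, 0, −1, 1/2], [1/2, 1/5, 1/3, 1/4], [1/5, 1/2, 1/3, 1/4]], in which the stable matching gives every agent utility 1/2 (man 1 ↔ woman 3, man 2 ↔ woman 4, man 3 ↔ woman 1, man 4 ↔ woman 2). Then there do not exist positive reals λ₁,...,λ₄ > 0 and μ₁,...,μ₄ > 0 such that λ_i (1/2 − U(i,j)) + μ_j (1/2 − V(i,j)) ≥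 0 for all pairs (i,j). -/
theorem stmt_17 (U V : Fin 4 → Fin 4 → ℝ)
    (hU : U = !![1.01, 0, 1/2, -1; 0, 1, -1, 1/2;
                 1/2, 1/5, 1/3, 1/4; 1/5, 1/2, 1/3, 1/4])
    (hV : V = !![0, 1, 1/2, -1; 1, 0, -1, 1/2;
                 1/2, 1/5, 1/3, 1/4; 1/5, 1/2, 1/3, 1/4]) :
    ¬ ∃ lam mu : Fin 4 → ℝ, (∀ i, 0 < lam i) ∧ (∀ j, 0 < mu j) ∧
        ∀ i j, 0 ≤ lam i * (1 / 2 - U i j) + mu j * (1 / 2 - V i j) := by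
  rintro ⟨lam, mu, hlam, hmu, h⟩
  have h00 := h 0 0
  have h01 := h 0 1
  have h10 := h 1 0
  have h11 := h 1 1
  norm_num [hU, hV, Matrix.cons_val', Matrix.cons_val_zero, Matrix.cons_val_one,
    Matrix.head_cons, Matrix.empty_val', Matrix.cons_val_fin_one] at h00 h01 h10 h11
  have := hlam 0
  nlinarith [h00, h01, h10, h11, this]
end

section
/- There exists a cardinal marriage market (U, V) with n ≥ 3 agents per side such that no matching σ is no-trade stable, i.e., for every matching σ there exist i, j with U(i,j) + V(i,j) > U(i,σ(i)) + V(σ⁻¹(j), j). In particular, the 3×3 market U = [[0,2,1],[1,2,0],[1,0,2]], V = [[2,1,0],[1,2,0],[0,1,2]] has no no-trade stable matching: its unique NTU stable and unique TU stable matching is the identity, yet U(1,2)+V(1,2) = 3 > 2 = U(1,1)+V(2,2). -/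
/-!
A no-trade stable matching is TU stable, the payoffs it gives the agents being supporting payoff
vectors, and a TU stable matching maximises total surplus. In the example market the identity is
the unique surplus maximiser, so it is the only candidate; but under it man `0` receives
`U 0 0 = 0` and woman `1` receives `V 1 1 = 2`, while together they could produce
`U 0 1 + V 0 1 = 3`.
-/

/-- `σ` is NTU stable: no blocking pair. -/
def NTUStable (n : ℕ) (U V : Fin n → Fin n → ℝ) (σ : Equiv.Perm (Fin n)) : Prop :=
  ¬ ∃ i j : Fin n, U i (σ i) < U i j ∧ V (σ⁻¹ j) j < V i j

/-- `σ` is TU stable: supporting payoff vectors exist. -/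
def TUStable (n : ℕ) (U V : Fin n → Fin n → ℝ) (σ : Equiv.Perm (Fin n)) : Prop :=
  ∃ u v : Fin n → ℝ, (∀ i j, U i j + V i j ≤ u i + v j) ∧
    (∀ i, u i + v (σ i) = U i (σ i) + V i (σ i))

/-- `σ` is no-trade stable. -/
def NoTradeStable (n : ℕ) (U V : Fin n → Fin n → ℝ) (σ : Equiv.Perm (Fin n)) : Prop :=
  ∀ i j, U i j + V i j ≤ U i (σ i) + V (σ⁻¹ j) j

open Finset

def totalSurplus {n : ℕ} {α : Type*} [AddCommMonoid α] (U V : Fin n → Fin n → α)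
    (σ : Equiv.Perm (Fin n)) : α :=
  ∑ i, (U i (σ i) + V i (σ i))

section Stability

variable {n : ℕ} {U V : Fin n → Fin n → ℝ} {σ : Equiv.Perm (Fin n)}

theorem NoTradeStable.tuStable (h : NoTradeStable n U V σ) : TUStable n U V σ :=
  ⟨fun i => U i (σ i), fun j => V (σ⁻¹ j) j, h, fun i => by simp⟩

theorem TUStable.totalSurplus_le (h : TUStable n U V σ) (τ : Equiv.Perm (Fin n)) :
    totalSurplus U V τ ≤ totalSurplus U V σ := by
  obtain ⟨u, v, hle, heq⟩ := h
  calc totalSurplus U V τ ≤ ∑ i, (u i + v (τ i)) := sum_le_sum fun i _ => hle i (τ i)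
    _ = ∑ i, u i + ∑ j, v j := by rw [sum_add_distrib, Equiv.sum_comp]
    _ = ∑ i, (u i + v (σ i)) := by rw [sum_add_distrib, Equiv.sum_comp]
    _ = totalSurplus U V σ := sum_congr rfl fun i _ => heq i

end Stability

section IntegerMarkets

variable {n : ℕ} (U V : Fin n → Fin n → ℤ) (σ : Equiv.Perm (Fin n))

theorem ntuStable_intCast_iff :
    NTUStable n (fun i j => (U i j : ℝ)) (fun i j => (V i j : ℝ)) σ ↔
      ¬ ∃ i j, U i (σ i) < U i j ∧ V (σ⁻¹ j) j < V i j := by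
  simp only [NTUStable, Int.cast_lt]

theorem totalSurplus_intCast :
    totalSurplus (fun i j => (U i j : ℝ)) (fun i j => (V i j : ℝ)) σ =
      ((totalSurplus U V σ : ℤ) : ℝ) := by
  simp [totalSurplus]

end IntegerMarkets

namespace NoTradeExample

-- Integer entries make the finitely many stability conditions decidable by `decide`.
def U : Fin 3 → Fin 3 → ℤ := !![0, 2, 1; 1, 2, 0; 1, 0, 2]

def V : Fin 3 → Fin 3 → ℤ := !![2, 1, 0; 1, 2, 0; 0, 1, 2]

local notation "Uℝ" => fun i j => ((U i j : ℤ) : ℝ)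
local notation "Vℝ" => fun i j => ((V i j : ℤ) : ℝ)

theorem intCast_U : (Uℝ) = !![0, 2, 1; 1, 2, 0; 1, 0, 2] := by
  ext i j; fin_cases i <;> fin_cases j <;> simp [U]

theorem intCast_V : (Vℝ) = !![2, 1, 0; 1, 2, 0; 0, 1, 2] := by
  ext i j; fin_cases i <;> fin_cases j <;> simp [V]

theorem ntuStable_iff (σ : Equiv.Perm (Fin 3)) : NTUStable 3 Uℝ Vℝ σ ↔ σ = 1 := by
  rw [ntuStable_intCast_iff]
  revert σ
  decide

theorem totalSurplus_lt_of_ne_one :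
    ∀ σ : Equiv.Perm (Fin 3), σ ≠ 1 → totalSurplus U V σ < totalSurplus U V 1 := by
  decide

theorem tuStable_one : TUStable 3 Uℝ Vℝ 1 := by
  -- an optimal dual solution of the assignment problem with surplus `U + V`
  refine ⟨![0, 1, 1], ![2, 3, 3], fun i j => ?_, fun i => ?_⟩ <;>
    fin_cases i <;> try fin_cases j
  all_goals norm_num [U, V]

theorem tuStable_iff (σ : Equiv.Perm (Fin 3)) : TUStable 3 Uℝ Vℝ σ ↔ σ = 1 := by
  refine ⟨fun h => ?_, fun h => h ▸ tuStable_one⟩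
  by_contra hσ
  have := h.totalSurplus_le 1
  rw [totalSurplus_intCast, totalSurplus_intCast, Int.cast_le] at this
  exact (totalSurplus_lt_of_ne_one σ hσ).not_ge this

theorem not_noTradeStable (σ : Equiv.Perm (Fin 3)) : ¬ NoTradeStable 3 Uℝ Vℝ σ := by
  intro h
  obtain rfl := (tuStable_iff σ).1 h.tuStable
  have := h 0 1
  norm_num [U, V] at this

end NoTradeExample

theorem stmt_18 :
    (∃ n : ℕ, 3 ≤ n ∧ ∃ U V : Fin n → Fin n → ℝ,
      ∀ σ : Equiv.Perm (Fin n), ∃ i j, U i (σ i) + V (σ⁻¹ j) j < U i j + V i j) ∧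
    (∀ U V : Fin 3 → Fin 3 → ℝ,
      U = !![0, 2, 1; 1, 2, 0; 1, 0, 2] → V = !![2, 1, 0; 1, 2, 0; 0, 1, 2] →
        (∀ σ : Equiv.Perm (Fin 3), NTUStable 3 U V σ ↔ σ = 1) ∧
        (∀ σ : Equiv.Perm (Fin 3), TUStable 3 U V σ ↔ σ = 1) ∧
        (U 0 1 + V 0 1 = 3 ∧ U 0 0 + V 1 1 = 2 ∧ U 0 0 + V 1 1 < U 0 1 + V 0 1) ∧
        (∀ σ : Equiv.Perm (Fin 3), ¬ NoTradeStable 3 U V σ)) := by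
  refine ⟨⟨3, le_rfl, fun i j => (NoTradeExample.U i j : ℝ), fun i j => (NoTradeExample.V i j : ℝ),
    fun σ => ?_⟩, ?_⟩
  · simpa [NoTradeStable] using NoTradeExample.not_noTradeStable σ
  · intro U V hU hV
    obtain rfl := hU.trans NoTradeExample.intCast_U.symm
    obtain rfl := hV.trans NoTradeExample.intCast_V.symm
    exact ⟨NoTradeExample.ntuStable_iff, NoTradeExample.tuStable_iff,
      by norm_num [NoTradeExample.U, NoTradeExample.V], NoTradeExample.not_noTradeStable⟩
end
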